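/- Let Cov_Fib[ℓ] denote the length of the shortest cover of the length-ℓ prefix of the infinite Fibonacci word Fib. For every k ≥ 4 and every ℓ with F_k < ℓ < F_{k+1} such that ℓ ≠ F_{k+1} − 1 and ℓ ≠ 2F_{k−1} − 1, it holds that Cov_Fib[ℓ] = Cov_Fib[ℓ − F_{k−1}]. -/

import Mathlib

section Defs

variable {α : Type*}

/-- `C` occurs in `T` at starting position `i`. -/
def OccursAt (C T : List α) (i : ℕ) : Prop :=
  i + C.length ≤ T.length ∧ (T.drop i).take C.length = C

/-- `C` is a cover of `T`: `C` occurs in `T` and every position of `T`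
lies within an occurrence of `C`. -/
def IsCover (C T : List α) : Prop :=
  (∃ i, OccursAt C T i) ∧
    ∀ q, q < T.length → ∃ i, OccursAt C T i ∧ i ≤ q ∧ q < i + C.length

/-- A border of `T` is both a prefix and a suffix of `T`. -/
def IsBorder (B T : List α) : Prop := B <+: T ∧ B <:+ T

/-- `p` is a period of `U`: `U[i] = U[i+p]` for all `0 ≤ i < |U| - p`. -/
def IsPeriod (p : ℕ) (U : List α) : Prop :=
  0 < p ∧ ∀ i, i + p < U.length → U[i]? = U[i + p]?

/-- `U` is aperiodic: its smallest period `p` satisfies `2p > |U|`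
(equivalently, every period `p` of `U` satisfies `2p > |U|`). -/
def StrAperiodic (U : List α) : Prop := ∀ p, IsPeriod p U → U.length < 2 * p

/-- A nonempty string `X` is primitive if `X = Y^t` implies `t = 1`. -/
def StrPrimitive (X : List α) : Prop :=
  X ≠ [] ∧ ∀ (Y : List α) (t : ℕ), X = (List.replicate t Y).flatten → t = 1

/-- A string is superprimitive if it has no proper cover. -/
def Superprimitive (T : List α) : Prop :=
  ¬ ∃ C : List α, IsCover C T ∧ C.length < T.length

/-- The length of the shortest cover of `T`. -/
noncomputable def covLen (T : List α) : ℕ :=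
  sInf {c | ∃ C : List α, C.length = c ∧ IsCover C T}

/-- `{a, a+p, ..., a+(t-1)p}` is a maximal arithmetic progression with
difference `p` inside the set `S`. -/
def MaxProg (S : Set ℕ) (p a t : ℕ) : Prop :=
  0 < t ∧ (∀ r, r < t → a + r * p ∈ S) ∧ (∀ b, b + p = a → b ∉ S) ∧ a + t * p ∉ S

end Defs

/-- Fibonacci strings over `Bool` (`true` = a, `false` = b):
`Fib_0 = b`, `Fib_1 = a`, `Fib_m = Fib_{m-1} Fib_{m-2}`. -/
def fibWord : ℕ → List Bool
  | 0 => [false]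
  | 1 => [true]
  | (m + 2) => fibWord (m + 1) ++ fibWord m

/-- Fibonacci numbers `F_k = |Fib_k|`: `F_0 = F_1 = 1`, `F_2 = 2`, `F_3 = 3`, ... -/
def F (k : ℕ) : ℕ := (fibWord k).length

/-- The `n`-th letter of the infinite Fibonacci word (each `Fib_m`, `m ≥ 1`,
is a prefix of the infinite word, and `F_{n+2} > n`). -/
def fibInf (n : ℕ) : Bool := (fibWord (n + 2)).getD n false

/-- The length-`ℓ` prefix `Fib[0..ℓ)` of the infinite Fibonacci word. -/
def fibPrefix (ℓ : ℕ) : List Bool := (List.range ℓ).map fibInf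

/-- `Cov_Fib[ℓ]`: the length of the shortest cover of `Fib[0..ℓ)`. -/
noncomputable def covFib (ℓ : ℕ) : ℕ := covLen (fibPrefix ℓ)

/-! Write `ℓ = n + F_{k-1}`. The words `Fib_{m+1} Fib_m` and `Fib_m Fib_{m+1}` agree except in
their last two letters, so `F_j` is a period of `Fib[0..F_{j+2} - 2)`; in particular
`Fib[F_{k-1}..ℓ) = Fib[0..n)`. A cover of `Fib[0..ℓ)` no longer than `n` therefore covers
`Fib[0..n)`: an occurrence covering position `q + F_{k-1}` either starts at or after `F_{k-1}` and
shifts back, or starts before it, and then `q` lies in the occurrence at `0`. Conversely, a cover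
of `Fib[0..n)` covers both copies of `Fib[0..n)` in `Fib[0..ℓ)`, and when `n < F_{k-1}` its copies
shifted by `F_{k-2}` cover the gap `[n, F_{k-1})`; this needs `n ≤ F_{k-1} - 2`, which is what
excludes `ℓ = 2F_{k-1} - 1`. -/

section Cover

variable {α : Type*} {C T : List α}

theorem IsCover.length_le (hC : IsCover C T) : C.length ≤ T.length := by
  obtain ⟨⟨i, hi⟩, -⟩ := hC
  exact le_of_add_le_right hi.1

theorem IsCover.occursAt_zero (hC : IsCover C T) (hT : T ≠ []) : OccursAt C T 0 := by
  obtain ⟨i, hi, hi0, -⟩ := hC.2 0 (List.length_pos_iff.2 hT)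
  rwa [Nat.le_zero.1 hi0] at hi

theorem isCover_self (T : List α) : IsCover T T := by
  have hocc : OccursAt T T 0 := by constructor <;> simp
  exact ⟨⟨0, hocc⟩, fun _ hq => ⟨0, hocc, Nat.zero_le _, by omega⟩⟩

theorem covLen_le_length_of_isCover (hC : IsCover C T) : covLen T ≤ C.length :=
  Nat.sInf_le ⟨C, rfl, hC⟩

theorem exists_isCover_length_eq_covLen (T : List α) : ∃ C, C.length = covLen T ∧ IsCover C T :=
  Nat.sInf_mem (s := {c | ∃ C : List α, C.length = c ∧ IsCover C T}) ⟨_, T, rfl, isCover_self T⟩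

theorem covLen_eq_of_isCover {T' : List α} (hup : ∀ C, IsCover C T' → IsCover C T)
    (hdown : ∀ C, IsCover C T → C.length ≤ T'.length → IsCover C T') :
    covLen T = covLen T' := by
  obtain ⟨C', hC'len, hC'⟩ := exists_isCover_length_eq_covLen T'
  have hle : covLen T ≤ covLen T' := hC'len ▸ covLen_le_length_of_isCover (hup C' hC')
  obtain ⟨C, hClen, hC⟩ := exists_isCover_length_eq_covLen T
  have hfits : C.length ≤ T'.length := by
    rw [hClen]
    exact hle.trans (hC'len ▸ hC'.length_le)
  exact hle.antisymm (hClen ▸ covLen_le_length_of_isCover (hdown C hC hfits))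

end Cover

section Occurrence

variable {α : Type*} {f : ℕ → α} {C : List α} {n i : ℕ}

theorem occursAt_map_range_iff :
    OccursAt C ((List.range n).map f) i ↔
      i + C.length ≤ n ∧ ∀ r < C.length, C[r]? = some (f (i + r)) := by
  simp only [OccursAt, List.length_map, List.length_range, and_congr_right_iff]
  intro hin
  constructor
  · rintro heq r hr
    rw [← heq, List.getElem?_take_of_lt hr, List.getElem?_drop, List.getElem?_map,
      List.getElem?_range (by omega), Option.map_some]
  · intro hC
    refine List.ext_getElem? fun r => ?_
    rcases lt_or_ge r C.length with hr | hr
    · rw [hC r hr, List.getElem?_take_of_lt hr, List.getElem?_drop, List.getElem?_map,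
        List.getElem?_range (by omega), Option.map_some]
    · rw [List.getElem?_eq_none hr, List.getElem?_eq_none (by simp; omega)]

theorem OccursAt.of_map_range {n' i' : ℕ} (h : OccursAt C ((List.range n).map f) i)
    (hfit : i' + C.length ≤ n') (hf : ∀ r < C.length, f (i' + r) = f (i + r)) :
    OccursAt C ((List.range n').map f) i' := by
  obtain ⟨-, hC⟩ := occursAt_map_range_iff.1 h
  exact occursAt_map_range_iff.2 ⟨hfit, fun r hr => (hf r hr).symm ▸ hC r hr⟩

theorem IsCover.exists_occursAt_add {n' s q : ℕ}
    (hC : IsCover C ((List.range n).map f)) (hn' : n + s ≤ n')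
    (hper : ∀ y < n, f (y + s) = f y) (hsq : s ≤ q) (hq : q < n + s) :
    ∃ i, OccursAt C ((List.range n').map f) i ∧ i ≤ q ∧ q < i + C.length := by
  obtain ⟨i, hi, hiq, hqi⟩ := hC.2 (q - s) (by simp; omega)
  have hfit := (occursAt_map_range_iff.1 hi).1
  refine ⟨i + s, hi.of_map_range (by omega) fun r hr => ?_, by omega, by omega⟩
  rw [add_right_comm]
  exact hper _ (by omega)

end Occurrence

section Fibonacci

theorem F_add_two (m : ℕ) : F (m + 2) = F (m + 1) + F m := by
  simp [F, fibWord]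

theorem F_add_three (m : ℕ) : F (m + 3) = F (m + 2) + F (m + 1) := F_add_two (m + 1)

theorem F_pos : ∀ m, 0 < F m
  | 0 | 1 => by decide
  | m + 2 => F_add_two m ▸ Nat.add_pos_right _ (F_pos m)

theorem F_le_F_succ : ∀ m, F m ≤ F (m + 1)
  | 0 => by decide
  | m + 1 => by rw [F_add_two]; omega

theorem F_succ_le_two_mul : ∀ m, F (m + 1) ≤ 2 * F m
  | 0 => by decide
  | m + 1 => by rw [F_add_two]; have := F_le_F_succ m; omega

theorem lt_F_add_two : ∀ n, n < F (n + 2)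
  | 0 => F_pos 2
  | n + 1 => by rw [F_add_three]; have := lt_F_add_two n; have := F_pos (n + 1); omega

theorem fibWord_prefix_of_le {m m' : ℕ} (hm : 1 ≤ m) (h : m ≤ m') :
    fibWord m <+: fibWord m' := by
  induction m', h using Nat.le_induction with
  | base => exact List.prefix_refl _
  | succ m' hm' ih =>
    obtain ⟨m', rfl⟩ : ∃ j, m' = j + 1 := ⟨m' - 1, by omega⟩
    exact ih.trans ⟨fibWord m', rfl⟩

theorem fibWord_getElem?_eq_fibInf {m n : ℕ} (hm : 1 ≤ m) (hn : n < F m) :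
    (fibWord m)[n]? = some (fibInf n) := by
  have hM := fibWord_prefix_of_le hm (le_max_left m (n + 2))
  have hM' := fibWord_prefix_of_le (by omega) (le_max_right m (n + 2))
  have hInf : fibInf n = (fibWord (n + 2))[n]'(lt_F_add_two n) := by
    rw [fibInf, List.getD_eq_getElem?_getD, List.getElem?_eq_getElem (lt_F_add_two n),
      Option.getD_some]
  rw [List.getElem?_eq_getElem hn, hInf, ← List.prefix_iff_getElem?.1 hM n hn,
    List.prefix_iff_getElem?.1 hM' n (lt_F_add_two n)]

theorem fibWord_swap_take : ∀ m, (fibWord (m + 1) ++ fibWord m).take (F (m + 2) - 2)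
    = (fibWord m ++ fibWord (m + 1)).take (F (m + 2) - 2)
  | 0 => rfl
  | m + 1 => by
    have hlen : F (m + 3) - 2 = (fibWord (m + 1)).length + (F (m + 2) - 2) := by
      have := F_add_three m; have := F_add_two m; have := F_pos m
      exact (by omega : F (m + 3) - 2 = F (m + 1) + (F (m + 2) - 2))
    have e : fibWord (m + 2) = fibWord (m + 1) ++ fibWord m := rfl
    calc (fibWord (m + 2) ++ fibWord (m + 1)).take (F (m + 3) - 2)
        = fibWord (m + 1) ++ (fibWord m ++ fibWord (m + 1)).take (F (m + 2) - 2) := by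
          rw [hlen, e, List.append_assoc, List.take_length_add_append]
      _ = fibWord (m + 1) ++ (fibWord (m + 1) ++ fibWord m).take (F (m + 2) - 2) := by
          rw [fibWord_swap_take m]
      _ = (fibWord (m + 1) ++ fibWord (m + 2)).take (F (m + 3) - 2) := by
          rw [hlen, e, List.take_length_add_append]

theorem fibInf_add_F {j x : ℕ} (h : x + F j + 3 ≤ F (j + 2)) : fibInf (x + F j) = fibInf x := by
  have hF := F_add_two j
  have hcut : x + F j < F (j + 2) - 2 := by omega
  have hswap := congrArg (·[x + F j]?) (fibWord_swap_take j)
  simp only [List.getElem?_take_of_lt hcut] at hswap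
  rw [List.getElem?_append_right (Nat.le_add_left (F j) x),
    show x + F j - (fibWord j).length = x from Nat.add_sub_cancel x (F j)] at hswap
  have hleft : (fibWord (j + 1) ++ fibWord j)[x + F j]? = some (fibInf (x + F j)) :=
    fibWord_getElem?_eq_fibInf (m := j + 2) (by omega) (by omega)
  rw [hleft, fibWord_getElem?_eq_fibInf (by omega) (by omega)] at hswap
  exact Option.some.inj hswap

theorem fibInf_add_F_succ {m n : ℕ} (hn : n + 2 ≤ F (m + 2)) {y : ℕ} (hy : y < n) :
    fibInf (y + F (m + 1)) = fibInf y :=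
  fibInf_add_F (by have := F_add_three m; omega : y + F (m + 1) + 3 ≤ F (m + 3))

theorem fibPrefix_length (n : ℕ) : (fibPrefix n).length = n := by
  simp [fibPrefix]

end Fibonacci

section CoverTransfer

variable {m n : ℕ} {C : List Bool}

theorem IsCover.of_fibPrefix_add_F (hC : IsCover C (fibPrefix (n + F (m + 1))))
    (hlen : C.length ≤ n) (hn : n + 2 ≤ F (m + 2)) : IsCover C (fibPrefix n) := by
  have hp := F_pos (m + 1)
  have occ0 : OccursAt C (fibPrefix n) 0 :=
    (hC.occursAt_zero (List.ne_nil_of_length_pos (by rw [fibPrefix_length]; omega))).of_map_range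
      (by omega) fun _ _ => rfl
  refine ⟨⟨0, occ0⟩, fun q hq => ?_⟩
  rw [fibPrefix_length] at hq
  obtain ⟨i, hi, hiq, hqi⟩ := hC.2 (q + F (m + 1)) (by rw [fibPrefix_length]; omega)
  have hfit := (occursAt_map_range_iff.1 hi).1
  rcases lt_or_ge i (F (m + 1)) with hi' | hi'
  · exact ⟨0, occ0, Nat.zero_le _, by omega⟩
  · refine ⟨i - F (m + 1), hi.of_map_range (by omega) fun r hr => ?_, by omega, by omega⟩
    rw [← fibInf_add_F_succ hn (by omega : i - F (m + 1) + r < n)]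
    congr 1
    omega

theorem IsCover.fibPrefix_add_F (hC : IsCover C (fibPrefix n)) (hlo : F m < n)
    (hn : n + 2 ≤ F (m + 2)) (hgap : n + 1 ≠ F (m + 1)) :
    IsCover C (fibPrefix (n + F (m + 1))) := by
  have := F_add_two m
  have := F_succ_le_two_mul m
  have occ0 := hC.occursAt_zero (List.ne_nil_of_length_pos (by rw [fibPrefix_length]; omega))
  have hlen := (occursAt_map_range_iff.1 occ0).1
  refine ⟨⟨0, occ0.of_map_range (by omega) fun _ _ => rfl⟩, fun q hq => ?_⟩
  rw [fibPrefix_length] at hq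
  rcases lt_or_ge q n with hqn | hqn
  · exact hC.exists_occursAt_add (by omega) (fun _ _ => rfl) (Nat.zero_le q) (by omega)
  rcases le_or_gt (F (m + 1)) q with hqp | hqp
  · exact hC.exists_occursAt_add le_rfl (fun _ => fibInf_add_F_succ hn) hqp hq
  · have hgap' : n + 2 ≤ F (m + 1) := by omega
    exact hC.exists_occursAt_add (by omega)
      (fun y hy => fibInf_add_F (by omega : y + F m + 3 ≤ F (m + 2))) (by omega) (by omega)

theorem covFib_add_F (hlo : F m < n) (hn : n + 2 ≤ F (m + 2)) (hgap : n + 1 ≠ F (m + 1)) :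
    covFib (n + F (m + 1)) = covFib n :=
  covLen_eq_of_isCover (fun _ hC => hC.fibPrefix_add_F hlo hn hgap)
    fun _ hC hlen => hC.of_fibPrefix_add_F (by rwa [fibPrefix_length] at hlen) hn

end CoverTransfer

/-- For every `k ≥ 4` and every `ℓ` with `F_k < ℓ < F_{k+1}`, `ℓ ≠ F_{k+1} - 1`
and `ℓ ≠ 2F_{k-1} - 1`, we have `Cov_Fib[ℓ] = Cov_Fib[ℓ - F_{k-1}]`. -/
theorem stmt9 (k : ℕ) (hk : 4 ≤ k) (ℓ : ℕ)
    (h1 : F k < ℓ) (h2 : ℓ < F (k + 1))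
    (h3 : ℓ ≠ F (k + 1) - 1) (h4 : ℓ ≠ 2 * F (k - 1) - 1) :
    covFib ℓ = covFib (ℓ - F (k - 1)) := by
  obtain ⟨m, rfl⟩ : ∃ m, k = m + 2 := ⟨k - 2, by omega⟩
  rw [show m + 2 - 1 = m + 1 from rfl] at h4 ⊢
  rw [show m + 2 + 1 = m + 3 from rfl, F_add_three] at h2 h3
  have := F_add_two m
  have := F_pos (m + 1)
  obtain ⟨n, rfl⟩ : ∃ n, ℓ = n + F (m + 1) := ⟨ℓ - F (m + 1), by omega⟩
  rw [Nat.add_sub_cancel]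
  exact covFib_add_F (by omega) (by omega) (by omega)
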